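/- Let C and D be reflexive symmetric digraph cycles of lengths m and n respectively, with 4 ≤ n ≤ m, and let w be an integer. Then the subgraph Hom_w(C,D) of Hom(C,D) induced by the homomorphisms of wind w: (1) is a single connected component if 0 ≤ |w| < m/n; (2) consists of exactly n isolated vertices if 0 < |w| = m/n; and (3) is empty if m/n < |w|. -/

import Mathlib

open scoped Classical

namespace Recon

/-- Orientation letters for edges of a digraph cycle: `+`, `-`, `*`. -/
inductive Orient : Type
  | plus
  | minus
  | star
deriving DecidableEq

/-- A forward arc is allowed along an edge with this orientation letter. -/
def Orient.fwd : Orient → Prop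
  | Orient.plus => True
  | Orient.minus => False
  | Orient.star => True

/-- A backward arc is allowed along an edge with this orientation letter. -/
def Orient.bwd : Orient → Prop
  | Orient.plus => False
  | Orient.minus => True
  | Orient.star => True

/-- The arc relation of the reflexive digraph cycle on `ZMod m` whose orientation
string is `f`, where `f c` is the orientation of the edge from `c` to `c + 1`. -/
def cycRel {m : ℕ} (f : ZMod m → Orient) (u v : ZMod m) : Prop :=
  u = v ∨ (v = u + 1 ∧ (f u).fwd) ∨ (u = v + 1 ∧ (f v).bwd)

/-- `φ` is a digraph homomorphism. -/
def IsHom {α β : Type*} (rG : α → α → Prop) (rH : β → β → Prop) (φ : α → β) : Prop :=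
  ∀ u v, rG u v → rH (φ u) (φ v)

/-- The arc relation of the Hom-graph `Hom(G,H)`. -/
def HomArc {α β : Type*} (rG : α → α → Prop) (rH : β → β → Prop) (φ ψ : α → β) : Prop :=
  ∀ u v, rG u v → rH (φ u) (ψ v)

/-- `φψ` is an edge of the Hom-graph. -/
def HomEdge {α β : Type*} (rG : α → α → Prop) (rH : β → β → Prop) (φ ψ : α → β) : Prop :=
  HomArc rG rH φ ψ ∨ HomArc rG rH ψ φ

/-- The contribution of the edge `c (c+1)` of `C` to the increase of `φ`:
`1` if increasing, `-1` if decreasing, `0` if stationary. -/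
def edgeVal {m n : ℕ} (φ : ZMod m → ZMod n) (c : ZMod m) : ℤ :=
  if φ (c + 1) = φ c + 1 then 1 else if φ (c + 1) = φ c - 1 then -1 else 0

/-- The increase of a map between cycles: #increasing − #decreasing edges. -/
def increase {m n : ℕ} (φ : ZMod m → ZMod n) : ℤ :=
  ∑ j ∈ Finset.range m, edgeVal φ ((j : ℕ) : ZMod m)

/-- The increase of the subpath `c_a … c_{a+L}`. -/
def partialInc {m n : ℕ} (φ : ZMod m → ZMod n) (a : ZMod m) (L : ℕ) : ℤ :=
  ∑ j ∈ Finset.range L, edgeVal φ (a + ((j : ℕ) : ZMod m))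

/-- `φ` has wind `w`, i.e. its increase is `w * n`. -/
def HasWind {m n : ℕ} (φ : ZMod m → ZMod n) (w : ℤ) : Prop :=
  increase φ = w * (n : ℤ)

/-- A reflexive digraph cycle is non-contractible if it has length at least 4
or is a directed 3-cycle. -/
def NonContractible {n : ℕ} (f : ZMod n → Orient) : Prop :=
  4 ≤ n ∨ (n = 3 ∧ ((∀ i, f i = Orient.plus) ∨ (∀ i, f i = Orient.minus)))

/-- `φ` is increasing: every edge increasing or stationary, not all stationary. -/
def IncMap {m n : ℕ} (φ : ZMod m → ZMod n) : Prop :=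
  (∀ c, φ (c + 1) = φ c + 1 ∨ φ (c + 1) = φ c) ∧ ∃ c, φ (c + 1) = φ c + 1

/-- `φ` is decreasing: every edge decreasing. -/
def DecMap {m n : ℕ} (φ : ZMod m → ZMod n) : Prop :=
  ∀ c, φ (c + 1) = φ c - 1

/-- `φ` is monotone: increasing or decreasing. -/
def MonMap {m n : ℕ} (φ : ZMod m → ZMod n) : Prop :=
  IncMap φ ∨ DecMap φ

/-- `φ` is monotone in the weak sense where constant maps also count. -/
def MonOrConst {m n : ℕ} (φ : ZMod m → ZMod n) : Prop :=
  (∀ c, φ (c + 1) = φ c + 1 ∨ φ (c + 1) = φ c) ∨ DecMap φ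

/-- `Y ≤* X`: `Y` is a `*`-substring of `X`, via a strictly increasing selection
function `α` with `Y i = X (α i)` unless `Y i = *`. -/
def StarSub {p q : ℕ} (Y : Fin p → Orient) (X : Fin q → Orient) : Prop :=
  ∃ α : Fin p → Fin q, StrictMono α ∧ ∀ i, Y i = X (α i) ∨ Y i = Orient.star

/-- The orientation string of the (pointed) cycle `f`. -/
def cycStr {m : ℕ} (f : ZMod m → Orient) : Fin m → Orient :=
  fun j => f ((j : ℕ) : ZMod m)

/-- The orientation string `σ^i(Y^k)` = `(σ^i Y)^k`: the `i`-th shift of the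
`k`-fold concatenation of the string of the cycle `fY`. -/
def shiftPowStr {s : ℕ} (fY : ZMod s → Orient) (k : ℕ) (i : ZMod s) :
    Fin (k * s) → Orient :=
  fun j => fY (i + ((j : ℕ) : ZMod s))

/-- The orientation string `σ^i(Y)^k y_{i+1}` : the `i`-th shift of the `k`-fold
concatenation of the string of `fY`, extended by its own first letter. -/
def shiftPowExtStr {s : ℕ} (fY : ZMod s → Orient) (k : ℕ) (i : ZMod s) :
    Fin (k * s + 1) → Orient :=
  fun j => fY (i + ((j : ℕ) : ZMod s))

/-- Every vertex that moves from `φ` to `ψ`, moves up. -/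
def MovesUpOnly {m n : ℕ} (φ ψ : ZMod m → ZMod n) : Prop :=
  ∀ c, ψ c = φ c ∨ ψ c = φ c + 1

/-- Every vertex that moves from `φ` to `ψ`, moves down. -/
def MovesDownOnly {m n : ℕ} (φ ψ : ZMod m → ZMod n) : Prop :=
  ∀ c, ψ c = φ c ∨ ψ c = φ c - 1

/-- `φψ` is an up edge of the Hom-graph. -/
def UpEdge {m n : ℕ} (rC : ZMod m → ZMod m → Prop) (rD : ZMod n → ZMod n → Prop)
    (φ ψ : ZMod m → ZMod n) : Prop :=
  HomEdge rC rD φ ψ ∧ MovesUpOnly φ ψ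

/-- `φ` and `ψ` are joined by a path (walk) inside the induced subgraph on `S`. -/
def ConnIn {m n : ℕ} (rC : ZMod m → ZMod m → Prop) (rD : ZMod n → ZMod n → Prop)
    (S : Set (ZMod m → ZMod n)) (φ ψ : ZMod m → ZMod n) : Prop :=
  Relation.ReflTransGen (fun a b => a ∈ S ∧ b ∈ S ∧ HomEdge rC rD a b) φ ψ

/-- `ψ` is reachable from `φ` by a path of up edges inside `S`. -/
def UpReachIn {m n : ℕ} (rC : ZMod m → ZMod m → Prop) (rD : ZMod n → ZMod n → Prop)
    (S : Set (ZMod m → ZMod n)) (φ ψ : ZMod m → ZMod n) : Prop :=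
  Relation.ReflTransGen (fun a b => a ∈ S ∧ b ∈ S ∧ UpEdge rC rD a b) φ ψ

/-- One step of a path of up edges between homomorphisms. -/
def UpStep {m n : ℕ} (rC : ZMod m → ZMod m → Prop) (rD : ZMod n → ZMod n → Prop)
    (φ ψ : ZMod m → ZMod n) : Prop :=
  IsHom rC rD φ ∧ IsHom rC rD ψ ∧ UpEdge rC rD φ ψ

/-- The set of vertices on which `φ` and `φ'` differ. -/
def Neq {α β : Type*} (φ φ' : α → β) : Set α := {g | φ g ≠ φ' g}

/-- The map `φ_T`, agreeing with `φ'` on `T` and with `φ` elsewhere. -/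
noncomputable def refineMap {α β : Type*} (φ φ' : α → β) (T : Set α) : α → β :=
  fun g => if g ∈ T then φ' g else φ g

/-- The edge `φφ'` is non-refinable: no nonempty proper subset `T` of `Neq φ φ'`
yields a homomorphism `φ_T`. -/
def NonRefinable {α β : Type*} (rG : α → α → Prop) (rH : β → β → Prop)
    (φ φ' : α → β) : Prop :=
  ¬ ∃ T : Set α, T.Nonempty ∧ T ⊂ Neq φ φ' ∧ IsHom rG rH (refineMap φ φ' T)

/-- `T` is a strong component of the digraph `r`. -/
def IsStrongComponent {α : Type*} (r : α → α → Prop) (T : Set α) : Prop :=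
  T.Nonempty ∧ (∀ u ∈ T, ∀ v ∈ T, Relation.ReflTransGen r u v) ∧
    ∀ T' : Set α, T ⊆ T' → (∀ u ∈ T', ∀ v ∈ T', Relation.ReflTransGen r u v) → T' = T

/-- `T` has no arcs out to vertices not in `T`. -/
def IsTerminal {α : Type*} (r : α → α → Prop) (T : Set α) : Prop :=
  ∀ u ∈ T, ∀ v, r u v → v ∈ T

/-- `Mon_1(C,D;i)`: monotone wind-1 homomorphisms `φ` with `φ c₀ = i`. -/
def Mon1 {m n : ℕ} (fC : ZMod m → Orient) (fD : ZMod n → Orient) (i : ZMod n) :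
    Set (ZMod m → ZMod n) :=
  {φ | IsHom (cycRel fC) (cycRel fD) φ ∧ MonMap φ ∧ increase φ = (n : ℤ) ∧ φ 0 = i}

/-- A one-step up edge: an edge from `φ` obtained by moving all the vertices of a
subpath of `C` mapped to a single vertex `d` up to `d + 1`. -/
def OneStepUp {m n : ℕ} (rC : ZMod m → ZMod m → Prop) (rD : ZMod n → ZMod n → Prop)
    (φ φ' : ZMod m → ZMod n) : Prop :=
  HomEdge rC rD φ φ' ∧
    ∃ (a : ZMod m) (k : ℕ) (d : ZMod n), k < m ∧
      (∀ j : ℕ, j ≤ k → φ (a + ((j : ℕ) : ZMod m)) = d) ∧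
      ∀ c, φ' c = if ∃ j : ℕ, j ≤ k ∧ c = a + ((j : ℕ) : ZMod m) then d + 1 else φ c

/-- The number of increasing edges of `φ` among the first `j` edges of `C`. -/
def incBefore {m n : ℕ} (φ : ZMod m → ZMod n) (j : ℕ) : ℕ :=
  ((Finset.range j).filter fun t =>
    φ (((t : ℕ) : ZMod m) + 1) = φ ((t : ℕ) : ZMod m) + 1).card

/-- One cutback-pushing step: `φ'` is obtained from `φ` by replacing the values of
`φ` on a cutback `c_a … c_{a+L}` by `φ a`. -/
def CutbackStep {m n : ℕ} (φ φ' : ZMod m → ZMod n) : Prop :=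
  ∃ (a : ZMod m) (L : ℕ), L < m ∧ partialInc φ a L = 0 ∧
    (∀ j : ℕ, 0 < j → j < L → partialInc φ a j < 0) ∧
    ∀ c, φ' c = if ∃ j : ℕ, j ≤ L ∧ c = a + ((j : ℕ) : ZMod m) then φ a else φ c

/-- `Mon_1^+(C,D;i)`: wind-1 homomorphisms whose monotone push-up is in `Mon_1(C,D;i)`. -/
def Mon1Plus {m n : ℕ} (fC : ZMod m → Orient) (fD : ZMod n → Orient) (i : ZMod n) :
    Set (ZMod m → ZMod n) :=
  {φ | IsHom (cycRel fC) (cycRel fD) φ ∧ increase φ = (n : ℤ) ∧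
    ∃ ψ ∈ Mon1 fC fD i, Relation.ReflTransGen CutbackStep φ ψ}

/-! ### Auxiliary development for STATEMENT 0 -/

section Aux

open Finset

lemma starRel_iff {k : ℕ} (u v : ZMod k) :
    cycRel (fun _ => Orient.star) u v ↔ (u = v ∨ v = u + 1 ∨ u = v + 1) := by
  simp [cycRel, Orient.fwd, Orient.bwd]

lemma zmod_natCast_ne_zero {k j : ℕ} (h0 : 0 < j) (h : j < k) : ((j : ℕ) : ZMod k) ≠ 0 := by
  haveI : NeZero k := ⟨by omega⟩
  intro hc
  have hv := ZMod.val_cast_of_lt h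
  rw [hc, ZMod.val_zero] at hv
  omega

lemma Z1 {n : ℕ} (hn : 4 ≤ n) : (1 : ZMod n) ≠ 0 := by
  have := zmod_natCast_ne_zero (k := n) (j := 1) one_pos (by omega)
  simpa using this

lemma Z2 {n : ℕ} (hn : 4 ≤ n) : (2 : ZMod n) ≠ 0 := by
  have := zmod_natCast_ne_zero (k := n) (j := 2) (by omega) (by omega)
  simpa using this

lemma Z3 {n : ℕ} (hn : 4 ≤ n) : (3 : ZMod n) ≠ 0 := by
  have := zmod_natCast_ne_zero (k := n) (j := 3) (by omega) (by omega)
  simpa using this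

lemma isHom_iff {m n : ℕ} (φ : ZMod m → ZMod n) :
    IsHom (cycRel (fun _ => Orient.star)) (cycRel (fun _ => Orient.star)) φ ↔
      ∀ c, φ (c + 1) = φ c ∨ φ (c + 1) = φ c + 1 ∨ φ (c + 1) = φ c - 1 := by
  constructor
  · intro h c
    have h2 := h c (c + 1) ((starRel_iff _ _).2 (Or.inr (Or.inl rfl)))
    rw [starRel_iff] at h2
    rcases h2 with h2 | h2 | h2
    · exact Or.inl h2.symm
    · exact Or.inr (Or.inl h2)
    · exact Or.inr (Or.inr (by rw [h2]; ring))
  · intro h u v huv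
    rw [starRel_iff] at huv
    rw [starRel_iff]
    rcases huv with rfl | rfl | rfl
    · exact Or.inl rfl
    · rcases h u with h' | h' | h'
      · exact Or.inl h'.symm
      · exact Or.inr (Or.inl h')
      · exact Or.inr (Or.inr (by rw [h']; ring))
    · rcases h v with h' | h' | h'
      · exact Or.inl h'
      · exact Or.inr (Or.inr h')
      · exact Or.inr (Or.inl (by rw [h']; ring))

lemma edgeVal_of_eq {m n : ℕ} (hn : 4 ≤ n) {φ : ZMod m → ZMod n} {c : ZMod m}
    (h : φ (c + 1) = φ c) : edgeVal φ c = 0 := by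
  have hA : ¬ φ (c + 1) = φ c + 1 := by
    rw [h]; intro hc; exact Z1 hn (by linear_combination -hc)
  have hB : ¬ φ (c + 1) = φ c - 1 := by
    rw [h]; intro hc; exact Z1 hn (by linear_combination hc)
  unfold edgeVal
  rw [if_neg hA, if_neg hB]

lemma edgeVal_of_up {m n : ℕ} {φ : ZMod m → ZMod n} {c : ZMod m}
    (h : φ (c + 1) = φ c + 1) : edgeVal φ c = 1 := by
  unfold edgeVal
  rw [if_pos h]

lemma edgeVal_of_down {m n : ℕ} (hn : 4 ≤ n) {φ : ZMod m → ZMod n} {c : ZMod m}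
    (h : φ (c + 1) = φ c - 1) : edgeVal φ c = -1 := by
  have hA : ¬ φ (c + 1) = φ c + 1 := by
    rw [h]; intro hc; exact Z2 hn (by linear_combination -hc)
  unfold edgeVal
  rw [if_neg hA, if_pos h]

lemma edgeVal_mem {m n : ℕ} (φ : ZMod m → ZMod n) (c : ZMod m) :
    edgeVal φ c = 0 ∨ edgeVal φ c = 1 ∨ edgeVal φ c = -1 := by
  unfold edgeVal
  split_ifs <;> simp

lemma cast_edgeVal {m n : ℕ} (hn : 4 ≤ n) {φ : ZMod m → ZMod n}
    (hφ : ∀ c, φ (c + 1) = φ c ∨ φ (c + 1) = φ c + 1 ∨ φ (c + 1) = φ c - 1) (c : ZMod m) :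
    ((edgeVal φ c : ℤ) : ZMod n) = φ (c + 1) - φ c := by
  rcases hφ c with h | h | h
  · rw [edgeVal_of_eq hn h, h]; push_cast; ring
  · rw [edgeVal_of_up h, h]; push_cast; ring
  · rw [edgeVal_of_down hn h, h]; push_cast; ring

/-- An integral "lift datum" for a homomorphism of wind `W / n`. -/
def GoodF (m : ℕ) (W : ℤ) (F : ℕ → ℤ) : Prop :=
  (∀ j, F (j + 1) - F j = 0 ∨ F (j + 1) - F j = 1 ∨ F (j + 1) - F j = -1) ∧
    ∀ j, F (j + m) = F j + W

/-- The homomorphism determined by a lift datum. -/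
def toPhi (m n : ℕ) (F : ℕ → ℤ) : ZMod m → ZMod n := fun c => ((F c.val : ℤ) : ZMod n)

lemma GoodF.shift {m : ℕ} {W : ℤ} {F : ℕ → ℤ} (hF : GoodF m W F) :
    ∀ q j, F (j + m * q) = F j + q * W := by
  intro q
  induction q with
  | zero => simp
  | succ q ih =>
      intro j
      have h1 : j + m * (q + 1) = (j + m * q) + m := by ring
      rw [h1, hF.2, ih]
      push_cast
      ring

lemma GoodF.emod {m : ℕ} {W : ℤ} {F : ℕ → ℤ} (hF : GoodF m W F) {j k : ℕ}
    (h : j % m = k % m) : F (j + 1) - F j = F (k + 1) - F k := by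
  have hj : F j = F (j % m) + (j / m : ℕ) * W := by
    conv_lhs => rw [← Nat.mod_add_div j m]
    exact hF.shift _ _
  have hj1 : F (j + 1) = F (j % m + 1) + (j / m : ℕ) * W := by
    have h2 : j + 1 = (j % m + 1) + m * (j / m) := by
      have := Nat.mod_add_div j m; omega
    rw [h2]
    exact hF.shift _ _
  have hk : F k = F (k % m) + (k / m : ℕ) * W := by
    conv_lhs => rw [← Nat.mod_add_div k m]
    exact hF.shift _ _
  have hk1 : F (k + 1) = F (k % m + 1) + (k / m : ℕ) * W := by
    have h2 : k + 1 = (k % m + 1) + m * (k / m) := by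
      have := Nat.mod_add_div k m; omega
    rw [h2]
    exact hF.shift _ _
  rw [hj, hj1, hk, hk1, h]
  ring

lemma GoodF.vmod {m : ℕ} {W : ℤ} {F G : ℕ → ℤ} (hF : GoodF m W F) (hG : GoodF m W G)
    {j k : ℕ} (h : j % m = k % m) : F j - G j = F k - G k := by
  have hj : F j = F (j % m) + (j / m : ℕ) * W := by
    conv_lhs => rw [← Nat.mod_add_div j m]
    exact hF.shift _ _
  have hjG : G j = G (j % m) + (j / m : ℕ) * W := by
    conv_lhs => rw [← Nat.mod_add_div j m]
    exact hG.shift _ _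
  have hk : F k = F (k % m) + (k / m : ℕ) * W := by
    conv_lhs => rw [← Nat.mod_add_div k m]
    exact hF.shift _ _
  have hkG : G k = G (k % m) + (k / m : ℕ) * W := by
    conv_lhs => rw [← Nat.mod_add_div k m]
    exact hG.shift _ _
  rw [hj, hjG, hk, hkG, h]
  ring

lemma GoodF.neg {m : ℕ} {W : ℤ} {F : ℕ → ℤ} (h : GoodF m W F) :
    GoodF m (-W) (fun j => - F j) := by
  constructor
  · intro j
    have := h.1 j
    simp only
    omega
  · intro j
    have := h.2 j
    simp only
    omega

lemma toPhi_natCast {m n : ℕ} (hm : 0 < m) {W : ℤ} (hWc : ((W : ℤ) : ZMod n) = 0)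
    {F : ℕ → ℤ} (hF : GoodF m W F) (j : ℕ) :
    toPhi m n F ((j : ℕ) : ZMod m) = ((F j : ℤ) : ZMod n) := by
  haveI : NeZero m := ⟨by omega⟩
  show ((F (((j : ℕ) : ZMod m)).val : ℤ) : ZMod n) = ((F j : ℤ) : ZMod n)
  rw [ZMod.val_natCast]
  have h1 : F j = F (j % m) + (j / m : ℕ) * W := by
    conv_lhs => rw [← Nat.mod_add_div j m]
    exact hF.shift _ _
  rw [h1]
  push_cast
  rw [hWc]
  ring

lemma toPhi_isHom {m n : ℕ} (hm : 0 < m) (hn : 4 ≤ n) {W : ℤ}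
    (hWc : ((W : ℤ) : ZMod n) = 0) {F : ℕ → ℤ} (hF : GoodF m W F) :
    IsHom (cycRel (fun _ => Orient.star)) (cycRel (fun _ => Orient.star)) (toPhi m n F) := by
  haveI : NeZero m := ⟨by omega⟩
  rw [isHom_iff]
  intro c
  have hc : toPhi m n F c = ((F c.val : ℤ) : ZMod n) := rfl
  have hc1 : toPhi m n F (c + 1) = ((F (c.val + 1) : ℤ) : ZMod n) := by
    have h2 : c + 1 = (((c.val + 1 : ℕ)) : ZMod m) := by
      push_cast [ZMod.natCast_zmod_val]
      ring
    rw [h2, toPhi_natCast hm hWc hF]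
  rcases hF.1 c.val with h | h | h
  · left
    rw [hc1, hc]
    have h3 : F (c.val + 1) = F c.val := by omega
    rw [h3]
  · right; left
    rw [hc1, hc]
    have h3 : F (c.val + 1) = F c.val + 1 := by omega
    rw [h3]; push_cast; ring
  · right; right
    rw [hc1, hc]
    have h3 : F (c.val + 1) = F c.val - 1 := by omega
    rw [h3]; push_cast; ring

lemma toPhi_edgeVal {m n : ℕ} (hm : 0 < m) (hn : 4 ≤ n) {W : ℤ}
    (hWc : ((W : ℤ) : ZMod n) = 0) {F : ℕ → ℤ} (hF : GoodF m W F) (j : ℕ) :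
    edgeVal (toPhi m n F) ((j : ℕ) : ZMod m) = F (j + 1) - F j := by
  have hcast : ((j : ℕ) : ZMod m) + 1 = (((j + 1 : ℕ)) : ZMod m) := by push_cast; ring
  have h1 : toPhi m n F ((j : ℕ) : ZMod m) = ((F j : ℤ) : ZMod n) :=
    toPhi_natCast hm hWc hF j
  have h2 : toPhi m n F (((j : ℕ) : ZMod m) + 1) = ((F (j + 1) : ℤ) : ZMod n) := by
    rw [hcast]; exact toPhi_natCast hm hWc hF (j + 1)
  rcases hF.1 j with h | h | h
  · have he : toPhi m n F (((j : ℕ) : ZMod m) + 1) = toPhi m n F ((j : ℕ) : ZMod m) := by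
      rw [h1, h2]
      have h3 : F (j + 1) = F j := by omega
      rw [h3]
    rw [edgeVal_of_eq hn he]
    omega
  · have he : toPhi m n F (((j : ℕ) : ZMod m) + 1) = toPhi m n F ((j : ℕ) : ZMod m) + 1 := by
      rw [h1, h2]
      have h3 : F (j + 1) = F j + 1 := by omega
      rw [h3]; push_cast; ring
    rw [edgeVal_of_up he]
    omega
  · have he : toPhi m n F (((j : ℕ) : ZMod m) + 1) = toPhi m n F ((j : ℕ) : ZMod m) - 1 := by
      rw [h1, h2]
      have h3 : F (j + 1) = F j - 1 := by omega
      rw [h3]; push_cast; ring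
    rw [edgeVal_of_down hn he]
    omega

lemma toPhi_increase {m n : ℕ} (hm : 0 < m) (hn : 4 ≤ n) {W : ℤ}
    (hWc : ((W : ℤ) : ZMod n) = 0) {F : ℕ → ℤ} (hF : GoodF m W F) :
    increase (toPhi m n F) = W := by
  unfold increase
  have hcong : ∀ j ∈ Finset.range m, edgeVal (toPhi m n F) ((j : ℕ) : ZMod m) = F (j + 1) - F j :=
    fun j _ => toPhi_edgeVal hm hn hWc hF j
  rw [Finset.sum_congr rfl hcong, Finset.sum_range_sub]
  have h0 := hF.2 0
  rw [zero_add] at h0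
  omega

end Aux

section Aux2

open Finset

lemma sum_range_zmod {m : ℕ} [NeZero m] (g : ZMod m → ℤ) :
    ∑ j ∈ Finset.range m, g ((j : ℕ) : ZMod m) = ∑ x : ZMod m, g x := by
  rw [Finset.sum_range (fun j => g ((j : ℕ) : ZMod m))]
  apply Fintype.sum_bijective (fun i : Fin m => ((i : ℕ) : ZMod m))
  · rw [Fintype.bijective_iff_injective_and_card]
    constructor
    · intro a b hab
      simp only at hab
      have h2 : (((a : ℕ) : ZMod m)).val = (((b : ℕ) : ZMod m)).val := congrArg ZMod.val hab
      rw [ZMod.val_cast_of_lt a.2, ZMod.val_cast_of_lt b.2] at h2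
      exact Fin.ext h2
    · simp [ZMod.card]
  · intro i; rfl

lemma sum_univ_shift {m : ℕ} [NeZero m] (g : ZMod m → ℤ) (a : ZMod m) :
    ∑ x : ZMod m, g (a + x) = ∑ x : ZMod m, g x :=
  Fintype.sum_bijective (fun x => a + x) (Equiv.addLeft a).bijective _ _ (fun _ => rfl)

lemma increase_eq_sum {m n : ℕ} [NeZero m] (φ : ZMod m → ZMod n) :
    increase φ = ∑ x : ZMod m, edgeVal φ x :=
  sum_range_zmod _

lemma partialInc_succ {m n : ℕ} (φ : ZMod m → ZMod n) (a : ZMod m) (j : ℕ) :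
    partialInc φ a (j + 1) = partialInc φ a j + edgeVal φ (a + ((j : ℕ) : ZMod m)) :=
  Finset.sum_range_succ _ _

lemma partialInc_add {m n : ℕ} (φ : ZMod m → ZMod n) (a : ZMod m) (j k : ℕ) :
    partialInc φ a (j + k) = partialInc φ a j + partialInc φ (a + ((j : ℕ) : ZMod m)) k := by
  induction k with
  | zero => simp [partialInc]
  | succ k ih =>
      have h1 : j + (k + 1) = (j + k) + 1 := rfl
      rw [h1, partialInc_succ, ih, partialInc_succ]
      have h2 : a + ((j : ℕ) : ZMod m) + ((k : ℕ) : ZMod m) = a + (((j + k : ℕ)) : ZMod m) := by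
        push_cast; ring
      rw [h2]
      ring

lemma partialInc_cycle {m n : ℕ} (hm : 0 < m) (φ : ZMod m → ZMod n) (b : ZMod m) :
    partialInc φ b m = increase φ := by
  haveI : NeZero m := ⟨by omega⟩
  have h := sum_range_zmod (fun x => edgeVal φ (b + x))
  unfold partialInc
  rw [h, sum_univ_shift, ← increase_eq_sum]

def liftF {m n : ℕ} (φ : ZMod m → ZMod n) : ℕ → ℤ :=
  fun j => ((φ 0).val : ℤ) + partialInc φ 0 j

lemma liftF_succ {m n : ℕ} (φ : ZMod m → ZMod n) (j : ℕ) :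
    liftF φ (j + 1) = liftF φ j + edgeVal φ ((j : ℕ) : ZMod m) := by
  unfold liftF
  rw [partialInc_succ, zero_add]
  ring

lemma liftF_good {m n : ℕ} (hm : 0 < m) {W : ℤ} {φ : ZMod m → ZMod n}
    (hw : increase φ = W) : GoodF m W (liftF φ) := by
  constructor
  · intro j
    rw [liftF_succ]
    have := edgeVal_mem φ ((j : ℕ) : ZMod m)
    omega
  · intro j
    unfold liftF
    rw [partialInc_add, partialInc_cycle hm, hw]
    ring

lemma toPhi_liftF {m n : ℕ} (hm : 0 < m) (hn : 4 ≤ n) {φ : ZMod m → ZMod n}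
    (hφ : IsHom (cycRel (fun _ => Orient.star)) (cycRel (fun _ => Orient.star)) φ) :
    toPhi m n (liftF φ) = φ := by
  haveI : NeZero m := ⟨by omega⟩
  haveI : NeZero n := ⟨by omega⟩
  have key : ∀ j : ℕ, ((liftF φ j : ℤ) : ZMod n) = φ ((j : ℕ) : ZMod m) := by
    intro j
    induction j with
    | zero => simp [liftF, partialInc, ZMod.natCast_zmod_val]
    | succ j ih =>
        have hstep : ((liftF φ (j + 1) : ℤ) : ZMod n)
            = ((liftF φ j : ℤ) : ZMod n) + ((edgeVal φ ((j : ℕ) : ZMod m) : ℤ) : ZMod n) := by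
          rw [liftF_succ]; push_cast; ring
        have he := cast_edgeVal hn ((isHom_iff φ).1 hφ) ((j : ℕ) : ZMod m)
        have hc : ((j : ℕ) : ZMod m) + 1 = (((j + 1 : ℕ)) : ZMod m) := by push_cast; ring
        rw [hstep, ih, he, ← hc]
        ring
  funext c
  show ((liftF φ c.val : ℤ) : ZMod n) = φ c
  rw [key c.val, ZMod.natCast_zmod_val]

lemma moveArc {m n : ℕ} {φ ψ : ZMod m → ZMod n}
    (hφ : IsHom (cycRel (fun _ => Orient.star)) (cycRel (fun _ => Orient.star)) φ)
    (hψ : IsHom (cycRel (fun _ => Orient.star)) (cycRel (fun _ => Orient.star)) ψ)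
    (c0 : ZMod m) (hup : ψ c0 = φ c0 + 1) (hoth : ∀ c, c ≠ c0 → ψ c = φ c) :
    HomArc (cycRel (fun _ => Orient.star)) (cycRel (fun _ => Orient.star)) φ ψ := by
  intro u v huv
  by_cases hv : v = c0
  · by_cases hu : u = c0
    · rw [hu, hv, hup]
      exact Or.inr (Or.inl ⟨rfl, trivial⟩)
    · have h2 := hψ u v huv
      rwa [hoth u hu] at h2
  · rw [hoth v hv]
    exact hφ u v huv

/-- The distance potential between two lift data. -/
def Psum (m : ℕ) (F G : ℕ → ℤ) : ℕ := ∑ j ∈ Finset.Icc 1 m, (F j - G j).natAbs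

lemma Psum_comm {m : ℕ} (F G : ℕ → ℤ) : Psum m F G = Psum m G F := by
  unfold Psum
  apply Finset.sum_congr rfl
  intro j _
  omega

lemma idx_red {m : ℕ} (hm : 0 < m) (t : ℕ) (ht : 1 ≤ t) :
    ∃ t' q, 1 ≤ t' ∧ t' ≤ m ∧ t = t' + m * q := by
  refine ⟨(t - 1) % m + 1, (t - 1) / m, by omega, ?_, ?_⟩
  · have := Nat.mod_lt (t - 1) hm
    omega
  · have := Nat.mod_add_div (t - 1) m
    omega

lemma consec_mod {m : ℕ} (hm2 : 2 ≤ m) (j : ℕ) : j % m ≠ (j + 1) % m := by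
  have h0 : 0 < m := by omega
  have h1 := Nat.mod_lt j h0
  have h3 : (j + 1) % m = (j % m + 1) % m := by
    rw [Nat.add_mod, Nat.mod_eq_of_lt (show 1 < m by omega)]
  rcases Nat.lt_or_ge (j % m + 1) m with h | h
  · rw [Nat.mod_eq_of_lt h] at h3
    omega
  · have h4 : j % m + 1 = m := by omega
    rw [h4, Nat.mod_self] at h3
    omega

lemma pred_mod {m : ℕ} (hm2 : 2 ≤ m) {j t : ℕ} (ht1 : 1 ≤ t) (htm : t ≤ m)
    (h : (j + 1) % m = t % m) : j % m = t - 1 := by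
  have h0 : 0 < m := by omega
  have h1 := Nat.mod_lt j h0
  have h3 : (j + 1) % m = (j % m + 1) % m := by
    rw [Nat.add_mod, Nat.mod_eq_of_lt (show 1 < m by omega)]
  have ht' : t % m = t ∨ (t = m ∧ t % m = 0) := by
    rcases Nat.lt_or_ge t m with hh | hh
    · exact Or.inl (Nat.mod_eq_of_lt hh)
    · have h5 : t = m := by omega
      exact Or.inr ⟨h5, by rw [h5]; exact Nat.mod_self m⟩
  rcases Nat.lt_or_ge (j % m + 1) m with hlt | hge
  · rw [Nat.mod_eq_of_lt hlt] at h3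
    omega
  · have h4 : j % m + 1 = m := by omega
    rw [h4, Nat.mod_self] at h3
    omega

end Aux2

section Aux3

open Finset

lemma exists_movable {m : ℕ} (hm : 0 < m) {W : ℤ} (hWm : |W| < (m : ℤ))
    {F G : ℕ → ℤ} (hF : GoodF m W F) (hG : GoodF m W G) {M : ℤ}
    (hMglob : ∀ j, F j - G j ≤ M)
    {r : ℕ} (hr1 : 1 ≤ r) (hrM : F r - G r = M) :
    ∃ t, 1 ≤ t ∧ t ≤ m ∧ F t - G t = M ∧ F (t + 1) - F t ≤ 0 ∧ 0 ≤ F t - F (t - 1) := by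
  have habs := abs_lt.1 hWm
  by_contra hC
  push_neg at hC
  have hblockAll : ∀ t, 1 ≤ t → F t - G t = M →
      (F (t + 1) - F t = 1 ∨ F t - F (t - 1) = -1) := by
    intro t ht hM
    obtain ⟨t', q, h1, h2, heq⟩ := idx_red hm t ht
    have hmod : t % m = t' % m := by rw [heq]; exact Nat.add_mul_mod_self_left t' m q
    have hmod1 : (t - 1) % m = (t' - 1) % m := by
      have h3 : t - 1 = (t' - 1) + m * q := by omega
      rw [h3]; exact Nat.add_mul_mod_self_left (t' - 1) m q
    have e1 : F (t + 1) - F t = F (t' + 1) - F t' := hF.emod hmod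
    have e2 : F t - F (t - 1) = F t' - F (t' - 1) := by
      have h4 := hF.emod hmod1
      have ha : t - 1 + 1 = t := by omega
      have hb : t' - 1 + 1 = t' := by omega
      rwa [ha, hb] at h4
    have e3 : F t' - G t' = M := by
      have h4 := hF.vmod hG hmod
      omega
    have hC' := hC t' h1 h2 e3
    have m1 := hF.1 t'
    have m2 := hF.1 (t' - 1)
    have hb : t' - 1 + 1 = t' := by omega
    rw [hb] at m2
    rw [e1, e2]
    by_cases hcc : F (t' + 1) - F t' ≤ 0
    · have := hC' hcc
      omega
    · omega
  by_cases hcase : ∃ r', 1 ≤ r' ∧ F r' - G r' = M ∧ F (r' + 1) - F r' ≠ 1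
  · obtain ⟨r', hr'1, hM', hne⟩ := hcase
    have chain : ∀ k, k ≤ m →
        F (r' + m - k) - G (r' + m - k) = M ∧
        F (r' + m - k + 1) - F (r' + m - k) ≠ 1 ∧
        (1 ≤ k → F (r' + m - k + 1) - F (r' + m - k) = -1) := by
      intro k
      induction k with
      | zero =>
          intro _
          have hFp := hF.2 r'
          have hGp := hG.2 r'
          have hFp1 := hF.2 (r' + 1)
          have hidx : r' + 1 + m = r' + m + 1 := by omega
          rw [hidx] at hFp1
          simp only [Nat.sub_zero]
          refine ⟨by omega, ?_, by omega⟩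
          intro hcon
          apply hne
          omega
      | succ k ih =>
          intro hk1
          obtain ⟨hDk, hek, _⟩ := ih (by omega)
          have hblocked := hblockAll (r' + m - k) (by omega) hDk
          have he : F (r' + m - k) - F (r' + m - k - 1) = -1 := by
            rcases hblocked with h | h
            · exact absurd h hek
            · exact h
          have hidx : r' + m - k - 1 + 1 = r' + m - k := by omega
          have hMg := hMglob (r' + m - k - 1)
          have hGmem := hG.1 (r' + m - k - 1)
          rw [hidx] at hGmem
          have hidx2 : r' + m - (k + 1) = r' + m - k - 1 := by omega
          rw [hidx2, hidx]
          exact ⟨by omega, by omega, fun _ => by omega⟩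
    have hterm : ∀ t ∈ Finset.range m, F (r' + (t + 1)) - F (r' + t) = -1 := by
      intro t htm
      rw [Finset.mem_range] at htm
      have hc := (chain (m - t) (by omega)).2.2 (by omega)
      have hi1 : r' + m - (m - t) = r' + t := by omega
      rw [hi1] at hc
      exact hc
    have hsum := Finset.sum_range_sub (fun t => F (r' + t)) m
    rw [Finset.sum_congr rfl hterm] at hsum
    simp only [Finset.sum_const, Finset.card_range, nsmul_eq_mul, mul_neg, mul_one,
      Nat.add_zero] at hsum
    have hFp := hF.2 r'
    omega
  · push_neg at hcase
    have chain : ∀ k, F (r + k) - G (r + k) = M ∧ F (r + k + 1) - F (r + k) = 1 := by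
      intro k
      induction k with
      | zero =>
          constructor
          · simpa using hrM
          · have := hcase r hr1 hrM
            simpa using this
      | succ k ih =>
          obtain ⟨hDk, hek⟩ := ih
          have hGmem := hG.1 (r + k)
          have hMg := hMglob (r + k + 1)
          have hD1 : F (r + k + 1) - G (r + k + 1) = M := by omega
          show F (r + k + 1) - G (r + k + 1) = M ∧ F (r + k + 1 + 1) - F (r + k + 1) = 1
          exact ⟨hD1, hcase (r + k + 1) (by omega) hD1⟩
    have hterm : ∀ t ∈ Finset.range m, F (r + (t + 1)) - F (r + t) = 1 :=
      fun t _ => (chain t).2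
    have hsum := Finset.sum_range_sub (fun t => F (r + t)) m
    rw [Finset.sum_congr rfl hterm] at hsum
    simp only [Finset.sum_const, Finset.card_range, nsmul_eq_mul, mul_one,
      Nat.add_zero] at hsum
    have hFp := hF.2 r
    omega

end Aux3

section Aux4

open Finset

lemma step_lemma {m n : ℕ} (hm : 4 ≤ m) (hn : 4 ≤ n) {W : ℤ} (hWm : |W| < (m : ℤ))
    (hWc : ((W : ℤ) : ZMod n) = 0)
    {F G : ℕ → ℤ} (hF : GoodF m W F) (hG : GoodF m W G)
    {r : ℕ} (hr1 : 1 ≤ r) (hrm : r ≤ m)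
    (hmax : ∀ j, 1 ≤ j → j ≤ m → F j - G j ≤ F r - G r)
    (hpos : 0 < F r - G r) :
    ∃ F', GoodF m W F' ∧
      (∃ c0 : ZMod m, toPhi m n F' c0 = toPhi m n F c0 - 1 ∧
        ∀ c, c ≠ c0 → toPhi m n F' c = toPhi m n F c) ∧
      Psum m F' G + 1 = Psum m F G := by
  haveI : NeZero m := ⟨by omega⟩
  have hm0 : 0 < m := by omega
  have hMglob : ∀ j, F j - G j ≤ F r - G r := by
    intro j
    rcases Nat.eq_zero_or_pos j with rfl | hj
    · have h2 := hF.vmod hG (j := 0) (k := m) (by simp)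
      rw [h2]
      exact hmax m (by omega) le_rfl
    · obtain ⟨t', q, h1, h2, heq⟩ := idx_red hm0 j hj
      have h3 := hF.vmod hG (show j % m = t' % m by
        rw [heq]; exact Nat.add_mul_mod_self_left t' m q)
      rw [h3]
      exact hmax t' h1 h2
  obtain ⟨t, ht1, htm, htM, hte1, hte2⟩ := exists_movable hm0 hWm hF hG hMglob hr1 rfl
  have hmodm : ∀ j, 1 ≤ j → j ≤ m → (j % m = t % m ↔ j = t) := by
    intro j hj1 hjm
    constructor
    · intro h
      by_cases hjm2 : j < m <;> by_cases htm2 : t < m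
      · rwa [Nat.mod_eq_of_lt hjm2, Nat.mod_eq_of_lt htm2] at h
      · have ht3 : t = m := by omega
        subst ht3
        rw [Nat.mod_eq_of_lt hjm2, Nat.mod_self] at h
        omega
      · have hj3 : j = m := by omega
        subst hj3
        rw [Nat.mod_self, Nat.mod_eq_of_lt htm2] at h
        omega
      · omega
    · intro h
      rw [h]
  refine ⟨fun j => if j % m = t % m then F j - 1 else F j, ⟨?_, ?_⟩, ?_, ?_⟩
  · -- increments
    intro j
    simp only
    by_cases h1 : j % m = t % m
    · by_cases h2 : (j + 1) % m = t % m
      · exact absurd (h1.trans h2.symm) (consec_mod (by omega) j)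
      · rw [if_pos h1, if_neg h2]
        have he := hF.emod (k := t) h1
        have hb := hF.1 t
        omega
    · by_cases h2 : (j + 1) % m = t % m
      · rw [if_pos h2, if_neg h1]
        have hjm : j % m = t - 1 := pred_mod (by omega) ht1 htm h2
        have htm1 : (t - 1) % m = t - 1 := Nat.mod_eq_of_lt (by omega)
        have he := hF.emod (k := t - 1) (by rw [hjm, htm1])
        have hup := hF.1 (t - 1)
        have hidx : t - 1 + 1 = t := by omega
        rw [hidx] at he hup
        omega
      · rw [if_neg h1, if_neg h2]
        exact hF.1 j
  · -- period
    intro j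
    simp only
    have h1 : (j + m) % m = j % m := Nat.add_mod_right j m
    rw [h1]
    have h2 := hF.2 j
    split_ifs with h
    · omega
    · omega
  · -- single vertex move
    have hval : ∀ c : ZMod m, c.val % m = c.val := fun c => Nat.mod_eq_of_lt (ZMod.val_lt c)
    have hc0val : (((t : ℕ) : ZMod m)).val = t % m := ZMod.val_natCast m t
    have hceq : ∀ c : ZMod m, c = ((t : ℕ) : ZMod m) ↔ c.val % m = t % m := by
      intro c
      rw [hval c]
      constructor
      · intro h; rw [h]; exact hc0val
      · intro h
        have h3 := congrArg (fun x : ℕ => (x : ZMod m)) h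
        have h3 : ((c.val : ℕ) : ZMod m) = ((t % m : ℕ) : ZMod m) := h3
        rw [ZMod.natCast_zmod_val] at h3
        rw [h3, ← hc0val, ZMod.natCast_zmod_val]
    refine ⟨((t : ℕ) : ZMod m), ?_, ?_⟩
    · show ((((if (((t : ℕ) : ZMod m)).val % m = t % m then F ((((t : ℕ) : ZMod m)).val) - 1
          else F ((((t : ℕ) : ZMod m)).val)) : ℤ)) : ZMod n) = _
      rw [if_pos ((hceq _).1 rfl)]
      show _ = ((F ((((t : ℕ) : ZMod m)).val) : ℤ) : ZMod n) - 1
      push_cast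
      ring
    · intro c hc
      show ((((if c.val % m = t % m then F c.val - 1 else F c.val) : ℤ)) : ZMod n)
          = ((F c.val : ℤ) : ZMod n)
      rw [if_neg (fun h => hc ((hceq c).2 h))]
  · -- potential drop
    have htIcc : t ∈ Finset.Icc 1 m := Finset.mem_Icc.2 ⟨ht1, htm⟩
    unfold Psum
    rw [← Finset.add_sum_erase _ _ htIcc, ← Finset.add_sum_erase _ (fun j => (F j - G j).natAbs) htIcc]
    have herase : ∑ j ∈ (Finset.Icc 1 m).erase t,
        ((if j % m = t % m then F j - 1 else F j) - G j).natAbs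
        = ∑ j ∈ (Finset.Icc 1 m).erase t, (F j - G j).natAbs := by
      apply Finset.sum_congr rfl
      intro j hj
      have hj' := Finset.mem_of_mem_erase hj
      rw [Finset.mem_Icc] at hj'
      have hne := Finset.ne_of_mem_erase hj
      rw [if_neg (fun h => hne ((hmodm j hj'.1 hj'.2).1 h))]
    rw [herase]
    simp only
    split_ifs with hsp
    · omega
    · exact absurd trivial hsp

end Aux4

section Aux5

open Finset

lemma toPhi_eq_of_Psum_zero {m n : ℕ} (hm : 4 ≤ m) {W : ℤ} {F G : ℕ → ℤ}
    (hF : GoodF m W F) (hG : GoodF m W G) (h : Psum m F G = 0) :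
    toPhi m n F = toPhi m n G := by
  haveI : NeZero m := ⟨by omega⟩
  have hall : ∀ j, 1 ≤ j → j ≤ m → F j = G j := by
    intro j h1 h2
    have h3 := (Finset.sum_eq_zero_iff).1 h j (Finset.mem_Icc.2 ⟨h1, h2⟩)
    omega
  funext c
  show ((F c.val : ℤ) : ZMod n) = ((G c.val : ℤ) : ZMod n)
  rcases Nat.eq_zero_or_pos c.val with h0 | h1
  · rw [h0]
    have hFm := hF.2 0
    have hGm := hG.2 0
    rw [zero_add] at hFm hGm
    have hm' : F m = G m := hall m (by omega) le_rfl
    have h4 : F 0 = G 0 := by omega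
    rw [h4]
  · rw [hall c.val h1 (le_of_lt (ZMod.val_lt c))]

lemma conn_main {m n : ℕ} (hm : 4 ≤ m) (hn : 4 ≤ n) {W : ℤ} (hWm : |W| < (m : ℤ))
    (hWc : ((W : ℤ) : ZMod n) = 0) {S : Set (ZMod m → ZMod n)}
    (hmem : ∀ H : ℕ → ℤ, GoodF m W H → toPhi m n H ∈ S) :
    ∀ (N : ℕ) (F G : ℕ → ℤ), GoodF m W F → GoodF m W G → Psum m F G ≤ N →
      ConnIn (cycRel (fun _ => Orient.star)) (cycRel (fun _ => Orient.star)) S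
        (toPhi m n F) (toPhi m n G) := by
  intro N
  induction N with
  | zero =>
      intro F G hF hG hP
      rw [toPhi_eq_of_Psum_zero hm hF hG (by omega)]
      exact Relation.ReflTransGen.refl
  | succ N ih =>
      intro F G hF hG hP
      by_cases h0 : Psum m F G = 0
      · rw [toPhi_eq_of_Psum_zero hm hF hG h0]
        exact Relation.ReflTransGen.refl
      · have hex : ∃ j, 1 ≤ j ∧ j ≤ m ∧ F j - G j ≠ 0 := by
          by_contra hc
          push_neg at hc
          apply h0
          apply Finset.sum_eq_zero
          intro j hj
          rw [Finset.mem_Icc] at hj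
          have := hc j hj.1 hj.2
          omega
        obtain ⟨j0, hj01, hj0m, hj0⟩ := hex
        obtain ⟨r, hrmem, hrmax⟩ :=
          Finset.exists_max_image (Finset.Icc 1 m) (fun j => F j - G j)
            ⟨1, Finset.mem_Icc.2 ⟨le_rfl, by omega⟩⟩
        rw [Finset.mem_Icc] at hrmem
        have hmax' : ∀ j, 1 ≤ j → j ≤ m → F j - G j ≤ F r - G r := by
          intro j h1 h2
          exact hrmax j (Finset.mem_Icc.2 ⟨h1, h2⟩)
        by_cases hpos : 0 < F r - G r
        · obtain ⟨F', hF', ⟨c0, hc0, hoth⟩, hPs⟩ :=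
            step_lemma hm hn hWm hWc hF hG hrmem.1 hrmem.2 hmax' hpos
          have hedge : HomEdge (cycRel (fun _ => Orient.star)) (cycRel (fun _ => Orient.star))
              (toPhi m n F) (toPhi m n F') :=
            Or.inr (moveArc (toPhi_isHom (by omega) hn hWc hF')
              (toPhi_isHom (by omega) hn hWc hF) c0
              (by rw [hc0]; ring) (fun c hc => (hoth c hc).symm))
          exact Relation.ReflTransGen.head ⟨hmem F hF, hmem F' hF', hedge⟩
            (ih F' G hF' hG (by omega))
        · have hneg : 0 < G j0 - F j0 := by
            have := hmax' j0 hj01 hj0m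
            omega
          obtain ⟨r', hr'mem, hr'max⟩ :=
            Finset.exists_max_image (Finset.Icc 1 m) (fun j => G j - F j)
              ⟨1, Finset.mem_Icc.2 ⟨le_rfl, by omega⟩⟩
          rw [Finset.mem_Icc] at hr'mem
          have hmax'' : ∀ j, 1 ≤ j → j ≤ m → G j - F j ≤ G r' - F r' := by
            intro j h1 h2
            exact hr'max j (Finset.mem_Icc.2 ⟨h1, h2⟩)
          have hpos' : 0 < G r' - F r' := lt_of_lt_of_le hneg (hmax'' j0 hj01 hj0m)
          obtain ⟨G', hG', ⟨c0, hc0, hoth⟩, hPs⟩ :=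
            step_lemma hm hn hWm hWc hG hF hr'mem.1 hr'mem.2 hmax'' hpos'
          have hP2 : Psum m F G' ≤ N := by
            have h1 : Psum m G' F = Psum m F G' := Psum_comm _ _
            have h2 : Psum m G F = Psum m F G := Psum_comm _ _
            omega
          have hedge : HomEdge (cycRel (fun _ => Orient.star)) (cycRel (fun _ => Orient.star))
              (toPhi m n G') (toPhi m n G) :=
            Or.inl (moveArc (toPhi_isHom (by omega) hn hWc hG')
              (toPhi_isHom (by omega) hn hWc hG) c0
              (by rw [hc0]; ring) (fun c hc => (hoth c hc).symm))
          exact Relation.ReflTransGen.tail (ih F G' hF hG' hP2)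
            ⟨hmem G' hG', hmem G hG, hedge⟩

lemma sum_ind_lt (a : ℕ) : ∀ M : ℕ,
    ∑ tt ∈ Finset.range M, (if tt < a then (1 : ℤ) else 0) = ((min M a : ℕ) : ℤ) := by
  intro M
  induction M with
  | zero => simp
  | succ M ih =>
      rw [Finset.sum_range_succ, ih]
      rcases Nat.lt_or_ge M a with h | h
      · rw [if_pos h]
        push_cast
        omega
      · rw [if_neg (by omega)]
        push_cast
        omega

lemma canon_good {m : ℕ} (hm : 0 < m) (a : ℕ) (ham : a ≤ m) :
    GoodF m (a : ℤ)
      (fun j => ∑ tt ∈ Finset.range j, (if (((tt : ℕ) : ZMod m)).val < a then (1 : ℤ) else 0)) := by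
  haveI : NeZero m := ⟨by omega⟩
  constructor
  · intro j
    simp only
    rw [Finset.sum_range_succ]
    split_ifs <;> omega
  · intro j
    simp only
    rw [Finset.sum_range_add]
    have hcong : ∀ tt ∈ Finset.range m,
        (if ((((j + tt : ℕ)) : ZMod m)).val < a then (1 : ℤ) else 0)
          = (if ((((j : ℕ) : ZMod m)) + (((tt : ℕ) : ZMod m))).val < a then (1 : ℤ) else 0) := by
      intro tt _
      rw [Nat.cast_add]
    rw [Finset.sum_congr rfl hcong]
    have h2 := sum_range_zmod (m := m)
      (fun x => if ((((j : ℕ) : ZMod m)) + x).val < a then (1 : ℤ) else 0)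
    rw [h2]
    have h4 := sum_univ_shift (m := m) (fun y => if y.val < a then (1 : ℤ) else 0)
      ((j : ℕ) : ZMod m)
    rw [h4]
    have h3 := sum_range_zmod (m := m) (fun x => if x.val < a then (1 : ℤ) else 0)
    rw [← h3]
    have hcong2 : ∀ tt ∈ Finset.range m,
        (if (((tt : ℕ) : ZMod m)).val < a then (1 : ℤ) else 0)
          = (if tt < a then (1 : ℤ) else 0) := by
      intro tt htt
      rw [Finset.mem_range] at htt
      rw [ZMod.val_cast_of_lt htt]
    rw [Finset.sum_congr rfl hcong2, sum_ind_lt]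
    rw [Nat.min_eq_right ham]

lemma exists_goodF {m n : ℕ} (hm : 0 < m) {w : ℤ} (hwm : |w| * (n : ℤ) < (m : ℤ)) :
    ∃ F, GoodF m (w * (n : ℤ)) F := by
  rcases le_or_gt 0 w with hw | hw
  · have habs : |w| = w := abs_of_nonneg hw
    have hcast : ((w.toNat * n : ℕ) : ℤ) = w * (n : ℤ) := by
      push_cast [Int.toNat_of_nonneg hw]
      ring
    have ham : w.toNat * n ≤ m := by
      have h2 : ((w.toNat * n : ℕ) : ℤ) < (m : ℤ) := by
        rw [hcast, ← habs]
        exact hwm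
      exact_mod_cast le_of_lt h2
    have hg := canon_good hm (w.toNat * n) ham
    rw [hcast] at hg
    exact ⟨_, hg⟩
  · have hw' : (0 : ℤ) ≤ -w := by omega
    have habs : |w| = -w := abs_of_neg hw
    have hcast : (((-w).toNat * n : ℕ) : ℤ) = (-w) * (n : ℤ) := by
      push_cast [Int.toNat_of_nonneg hw']
      ring
    have ham : (-w).toNat * n ≤ m := by
      have h2 : (((-w).toNat * n : ℕ) : ℤ) < (m : ℤ) := by
        rw [hcast]
        have : (-w) * (n : ℤ) = |w| * n := by rw [habs]
        rw [this]
        exact hwm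
      exact_mod_cast le_of_lt h2
    have hg := (canon_good hm ((-w).toNat * n) ham).neg
    rw [hcast] at hg
    have h4 : -((-w) * (n : ℤ)) = w * (n : ℤ) := by ring
    rw [h4] at hg
    exact ⟨_, hg⟩

end Aux5

section Aux6

open Finset

/-- The "full-speed" monotone homomorphism `c ↦ i + ε·c`. -/
def phMap {m n : ℕ} (i ε : ZMod n) : ZMod m → ZMod n := fun c => i + ε * ((c.val : ℕ) : ZMod n)

lemma cast_mod_dvd {m n : ℕ} (hd : n ∣ m) (x : ℕ) :
    (((x % m : ℕ)) : ZMod n) = ((x : ℕ) : ZMod n) := by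
  conv_rhs => rw [← Nat.mod_add_div x m]
  push_cast
  rw [(ZMod.natCast_eq_zero_iff m n).2 hd]
  ring

lemma phMap_succ {m n : ℕ} (hm : 4 ≤ m) (hd : n ∣ m) (i ε : ZMod n) (c : ZMod m) :
    phMap i ε (c + 1) = phMap i ε c + ε := by
  haveI : NeZero m := ⟨by omega⟩
  haveI : Fact (1 < m) := ⟨by omega⟩
  unfold phMap
  rw [ZMod.val_add, ZMod.val_one, cast_mod_dvd hd]
  push_cast
  ring

lemma increase_of_up {m n : ℕ} {φ : ZMod m → ZMod n}
    (hup : ∀ c, φ (c + 1) = φ c + 1) : increase φ = (m : ℤ) := by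
  unfold increase
  have h1 : ∀ j ∈ Finset.range m, edgeVal φ ((j : ℕ) : ZMod m) = 1 :=
    fun j _ => edgeVal_of_up (hup _)
  rw [Finset.sum_congr rfl h1]
  simp

lemma increase_of_down {m n : ℕ} (hn : 4 ≤ n) {φ : ZMod m → ZMod n}
    (hdn : ∀ c, φ (c + 1) = φ c - 1) : increase φ = -(m : ℤ) := by
  unfold increase
  have h1 : ∀ j ∈ Finset.range m, edgeVal φ ((j : ℕ) : ZMod m) = -1 :=
    fun j _ => edgeVal_of_down hn (hdn _)
  rw [Finset.sum_congr rfl h1]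
  simp

lemma fullspeed_up {m n : ℕ} (hm : 0 < m) {φ : ZMod m → ZMod n}
    (hinc : increase φ = (m : ℤ)) : ∀ c, φ (c + 1) = φ c + 1 := by
  haveI : NeZero m := ⟨by omega⟩
  have hall : ∀ j ∈ Finset.range m, edgeVal φ ((j : ℕ) : ZMod m) = 1 := by
    have hnn : ∀ j ∈ Finset.range m, (0 : ℤ) ≤ 1 - edgeVal φ ((j : ℕ) : ZMod m) := by
      intro j _
      have := edgeVal_mem φ ((j : ℕ) : ZMod m)
      omega
    have hsum : ∑ j ∈ Finset.range m, (1 - edgeVal φ ((j : ℕ) : ZMod m)) = 0 := by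
      unfold increase at hinc
      rw [Finset.sum_sub_distrib, hinc]
      simp
    intro j hj
    have h5 := (Finset.sum_eq_zero_iff_of_nonneg hnn).1 hsum j hj
    omega
  intro c
  have hc := hall c.val (Finset.mem_range.2 (ZMod.val_lt c))
  rw [ZMod.natCast_zmod_val] at hc
  by_cases h1 : φ (c + 1) = φ c + 1
  · exact h1
  · unfold edgeVal at hc
    rw [if_neg h1] at hc
    by_cases h2 : φ (c + 1) = φ c - 1
    · rw [if_pos h2] at hc; norm_num at hc
    · rw [if_neg h2] at hc; norm_num at hc

lemma fullspeed_down {m n : ℕ} (hm : 0 < m) {φ : ZMod m → ZMod n}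
    (hinc : increase φ = -(m : ℤ)) : ∀ c, φ (c + 1) = φ c - 1 := by
  haveI : NeZero m := ⟨by omega⟩
  have hall : ∀ j ∈ Finset.range m, edgeVal φ ((j : ℕ) : ZMod m) = -1 := by
    have hnn : ∀ j ∈ Finset.range m, (0 : ℤ) ≤ 1 + edgeVal φ ((j : ℕ) : ZMod m) := by
      intro j _
      have := edgeVal_mem φ ((j : ℕ) : ZMod m)
      omega
    have hsum : ∑ j ∈ Finset.range m, (1 + edgeVal φ ((j : ℕ) : ZMod m)) = 0 := by
      unfold increase at hinc
      rw [Finset.sum_add_distrib, hinc]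
      simp
    intro j hj
    have h5 := (Finset.sum_eq_zero_iff_of_nonneg hnn).1 hsum j hj
    omega
  intro c
  have hc := hall c.val (Finset.mem_range.2 (ZMod.val_lt c))
  rw [ZMod.natCast_zmod_val] at hc
  by_cases h2 : φ (c + 1) = φ c - 1
  · exact h2
  · unfold edgeVal at hc
    rw [if_neg h2] at hc
    by_cases h1 : φ (c + 1) = φ c + 1
    · rw [if_pos h1] at hc; norm_num at hc
    · rw [if_neg h1] at hc; norm_num at hc

lemma eq_phMap {m n : ℕ} (hm : 0 < m) {φ : ZMod m → ZMod n} (ε : ZMod n)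
    (hd : ∀ c, φ (c + 1) = φ c + ε) : φ = phMap (φ 0) ε := by
  haveI : NeZero m := ⟨by omega⟩
  have key : ∀ j : ℕ, φ ((j : ℕ) : ZMod m) = φ 0 + ε * ((j : ℕ) : ZMod n) := by
    intro j
    induction j with
    | zero => simp
    | succ j ih =>
        have h2 : (((j + 1 : ℕ)) : ZMod m) = ((j : ℕ) : ZMod m) + 1 := by push_cast; ring
        rw [h2, hd, ih]
        push_cast
        ring
  funext c
  have h3 := key c.val
  rw [ZMod.natCast_zmod_val] at h3
  exact h3

lemma phArc_eq {m n : ℕ} (hm : 4 ≤ m) (hn : 4 ≤ n) (ε : ZMod n)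
    (hε : ε = 1 ∨ ε = -1) {i j : ZMod n}
    (h : HomArc (cycRel (fun _ => Orient.star)) (cycRel (fun _ => Orient.star))
      (phMap (m := m) i ε) (phMap (m := m) j ε)) : i = j := by
  haveI : NeZero m := ⟨by omega⟩
  haveI : Fact (1 < m) := ⟨by omega⟩
  have h00 := h 0 0 ((starRel_iff _ _).2 (Or.inl rfl))
  have h01 := h 0 1 ((starRel_iff (0 : ZMod m) 1).2 (Or.inr (Or.inl (zero_add 1).symm)))
  have h10 := h 1 0 ((starRel_iff (1 : ZMod m) 0).2 (Or.inr (Or.inr (zero_add 1).symm)))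
  have hv0 : ∀ i : ZMod n, phMap i ε (0 : ZMod m) = i := by
    intro i
    unfold phMap
    simp [ZMod.val_zero]
  have hv1 : ∀ i : ZMod n, phMap i ε (1 : ZMod m) = i + ε := by
    intro i
    unfold phMap
    rw [ZMod.val_one]
    simp
  rw [starRel_iff, hv0, hv0] at h00
  rw [starRel_iff, hv0, hv1] at h01
  rw [starRel_iff, hv1, hv0] at h10
  rcases hε with rfl | rfl
  · rcases h00 with h' | h' | h'
    · exact h'
    · rcases h01 with h2 | h2 | h2
      · exact absurd (show (2 : ZMod n) = 0 by linear_combination -h' - h2) (Z2 hn)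
      · exact absurd (show (1 : ZMod n) = 0 by linear_combination h2 - h') (Z1 hn)
      · exact absurd (show (3 : ZMod n) = 0 by linear_combination -h2 - h') (Z3 hn)
    · rcases h10 with h2 | h2 | h2
      · exact absurd (show (2 : ZMod n) = 0 by linear_combination h2 - h') (Z2 hn)
      · exact absurd (show (3 : ZMod n) = 0 by linear_combination -(h2 + h')) (Z3 hn)
      · exact absurd (show (1 : ZMod n) = 0 by linear_combination h2 - h') (Z1 hn)
  · rcases h00 with h' | h' | h'
    · exact h'
    · rcases h10 with h2 | h2 | h2
      · exact absurd (show (2 : ZMod n) = 0 by linear_combination -(h' + h2)) (Z2 hn)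
      · exact absurd (show (1 : ZMod n) = 0 by linear_combination h2 - h') (Z1 hn)
      · exact absurd (show (3 : ZMod n) = 0 by linear_combination -(h2 + h')) (Z3 hn)
    · rcases h01 with h2 | h2 | h2
      · exact absurd (show (2 : ZMod n) = 0 by linear_combination h2 - h') (Z2 hn)
      · exact absurd (show (3 : ZMod n) = 0 by linear_combination -(h2 + h')) (Z3 hn)
      · exact absurd (show (1 : ZMod n) = 0 by linear_combination h2 - h') (Z1 hn)

lemma part2_core {m n : ℕ} (hm : 4 ≤ m) (hn : 4 ≤ n) (S : Set (ZMod m → ZMod n))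
    (ε : ZMod n) (hε : ε = 1 ∨ ε = -1)
    (hfs : ∀ φ ∈ S, ∀ c, φ (c + 1) = φ c + ε)
    (hmem : ∀ i : ZMod n, phMap i ε ∈ S) :
    S.ncard = n ∧ ∀ φ ∈ S, ∀ ψ ∈ S,
      HomEdge (cycRel (fun _ => Orient.star)) (cycRel (fun _ => Orient.star)) φ ψ → φ = ψ := by
  haveI : NeZero m := ⟨by omega⟩
  haveI : NeZero n := ⟨by omega⟩
  have hSr : S = Set.range (fun i : ZMod n => phMap i ε) := by
    ext φ
    constructor
    · intro hφ
      exact ⟨φ 0, (eq_phMap (by omega) ε (hfs φ hφ)).symm⟩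
    · rintro ⟨i, rfl⟩
      exact hmem i
  have hinj : Function.Injective (fun i : ZMod n => phMap (m := m) i ε) := by
    intro i j hij
    have h2 := congrFun hij (0 : ZMod m)
    unfold phMap at h2
    simpa [ZMod.val_zero] using h2
  constructor
  · rw [hSr, ← Set.image_univ, Set.ncard_image_of_injective _ hinj, Set.ncard_univ,
      Nat.card_zmod]
  · intro φ hφ ψ hψ hedge
    rw [hSr] at hφ hψ
    obtain ⟨i, rfl⟩ := hφ
    obtain ⟨j, rfl⟩ := hψ
    simp only
    rcases hedge with harc | harc
    · rw [phArc_eq hm hn ε hε harc]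
    · rw [phArc_eq hm hn ε hε harc]

end Aux6

/-- For reflexive symmetric cycles `C` (length `m`) and `D` (length `n`)
with `4 ≤ n ≤ m`, the subgraph `Hom_w(C,D)` is a single component if `|w| < m/n`,
consists of `n` isolated vertices if `0 < |w| = m/n`, and is empty if `m/n < |w|`. -/
theorem symmetric_cycle_hom_components (m n : ℕ) (hn : 4 ≤ n) (hnm : n ≤ m) (w : ℤ)
    (S : Set (ZMod m → ZMod n))
    (hS : S = {φ | IsHom (cycRel (fun _ => Orient.star)) (cycRel (fun _ => Orient.star)) φ ∧
      HasWind φ w}) :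
    (|w| * (n : ℤ) < (m : ℤ) →
      S.Nonempty ∧ ∀ φ ∈ S, ∀ ψ ∈ S,
        ConnIn (cycRel (fun _ => Orient.star)) (cycRel (fun _ => Orient.star)) S φ ψ) ∧
    (0 < |w| → |w| * (n : ℤ) = (m : ℤ) →
      S.ncard = n ∧ ∀ φ ∈ S, ∀ ψ ∈ S,
        HomEdge (cycRel (fun _ => Orient.star)) (cycRel (fun _ => Orient.star)) φ ψ → φ = ψ) ∧
    ((m : ℤ) < |w| * (n : ℤ) → S = ∅) := by
  have hm4 : 4 ≤ m := le_trans hn hnm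
  haveI : NeZero m := ⟨by omega⟩
  haveI : NeZero n := ⟨by omega⟩
  subst hS
  refine ⟨?_, ?_, ?_⟩
  · -- Part 1 : |w| * n < m
    intro h1
    have hWm : |w * (n : ℤ)| < (m : ℤ) := by
      rw [abs_mul, abs_of_nonneg (show (0 : ℤ) ≤ (n : ℤ) by positivity)]
      exact h1
    have hWc : ((w * (n : ℤ) : ℤ) : ZMod n) = 0 := by
      push_cast
      rw [ZMod.natCast_self, mul_zero]
    have hmem : ∀ H : ℕ → ℤ, GoodF m (w * (n : ℤ)) H →
        toPhi m n H ∈ {φ : ZMod m → ZMod n |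
          IsHom (cycRel (fun _ => Orient.star)) (cycRel (fun _ => Orient.star)) φ ∧
            HasWind φ w} := by
      intro H hH
      exact ⟨toPhi_isHom (by omega) hn hWc hH, toPhi_increase (by omega) hn hWc hH⟩
    constructor
    · obtain ⟨F0, hF0⟩ := exists_goodF (show 0 < m by omega) h1
      exact ⟨toPhi m n F0, hmem F0 hF0⟩
    · intro φ hφ ψ hψ
      obtain ⟨hφh, hφw⟩ := hφ
      obtain ⟨hψh, hψw⟩ := hψ
      have hFg : GoodF m (w * (n : ℤ)) (liftF φ) := liftF_good (by omega) hφw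
      have hGg : GoodF m (w * (n : ℤ)) (liftF ψ) := liftF_good (by omega) hψw
      have e1 : toPhi m n (liftF φ) = φ := toPhi_liftF (by omega) hn hφh
      have e2 : toPhi m n (liftF ψ) = ψ := toPhi_liftF (by omega) hn hψh
      rw [← e1, ← e2]
      exact conn_main hm4 hn hWm hWc hmem (Psum m (liftF φ) (liftF ψ)) _ _ hFg hGg le_rfl
  · -- Part 2 : 0 < |w| and |w| * n = m
    intro hw0 heq
    have hd : n ∣ m := by
      have h2 : (m : ℤ) = ((|w|.toNat * n : ℕ) : ℤ) := by
        push_cast [Int.toNat_of_nonneg (abs_nonneg w)]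
        omega
      have h3 : m = |w|.toNat * n := by exact_mod_cast h2
      exact ⟨|w|.toNat, by rw [h3, Nat.mul_comm]⟩
    rcases lt_trichotomy w 0 with hwneg | hwz | hwpos
    · -- w < 0 : decreasing maps
      have hwn : w * (n : ℤ) = -(m : ℤ) := by
        have habs : |w| = -w := abs_of_neg hwneg
        rw [habs] at heq
        linarith
      apply part2_core hm4 hn _ (-1 : ZMod n) (Or.inr rfl)
      · intro φ hφ c
        obtain ⟨hφh, hφw⟩ := hφ
        have hinc : increase φ = -(m : ℤ) := by rw [hφw, hwn]
        have h5 := fullspeed_down (show 0 < m by omega) hinc c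
        rw [h5]
        ring
      · intro i
        have hdn : ∀ c, phMap (m := m) i (-1) (c + 1) = phMap (m := m) i (-1) c - 1 := by
          intro c
          rw [phMap_succ hm4 hd]
          ring
        refine ⟨?_, ?_⟩
        · rw [isHom_iff]
          intro c
          exact Or.inr (Or.inr (hdn c))
        · show increase _ = w * (n : ℤ)
          rw [increase_of_down hn hdn, hwn]
    · exact absurd hw0 (by rw [hwz]; simp)
    · -- w > 0 : increasing maps
      have hwn : w * (n : ℤ) = (m : ℤ) := by
        have habs : |w| = w := abs_of_pos hwpos
        rw [habs] at heq
        linarith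
      apply part2_core hm4 hn _ (1 : ZMod n) (Or.inl rfl)
      · intro φ hφ c
        obtain ⟨hφh, hφw⟩ := hφ
        have hinc : increase φ = (m : ℤ) := by rw [hφw, hwn]
        exact fullspeed_up (show 0 < m by omega) hinc c
      · intro i
        have hup : ∀ c, phMap (m := m) i 1 (c + 1) = phMap (m := m) i 1 c + 1 := by
          intro c
          rw [phMap_succ hm4 hd]
        refine ⟨?_, ?_⟩
        · rw [isHom_iff]
          intro c
          exact Or.inr (Or.inl (hup c))
        · show increase _ = w * (n : ℤ)
          rw [increase_of_up hup, hwn]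
  · -- Part 3 : m < |w| * n
    intro hlt
    rw [Set.eq_empty_iff_forall_notMem]
    rintro φ ⟨hhom, hwind⟩
    have hb : |increase φ| ≤ (m : ℤ) := by
      unfold increase
      calc |∑ j ∈ Finset.range m, edgeVal φ ((j : ℕ) : ZMod m)|
          ≤ ∑ j ∈ Finset.range m, |edgeVal φ ((j : ℕ) : ZMod m)| :=
            Finset.abs_sum_le_sum_abs _ _
        _ ≤ ∑ _j ∈ Finset.range m, (1 : ℤ) := by
            apply Finset.sum_le_sum
            intro j _
            have := edgeVal_mem φ ((j : ℕ) : ZMod m)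
            rcases this with h | h | h <;> rw [h] <;> norm_num
        _ = (m : ℤ) := by simp
    have hw' : increase φ = w * (n : ℤ) := hwind
    rw [hw'] at hb
    have h2 : |w * (n : ℤ)| = |w| * (n : ℤ) := by
      rw [abs_mul, abs_of_nonneg (show (0 : ℤ) ≤ (n : ℤ) by positivity)]
    rw [h2] at hb
    exact absurd (lt_of_le_of_lt hb hlt) (lt_irrefl _)

end Recon
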